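/- arXiv:1901.08968 — 5 statements merged into one kernel-verified Lean document; each statement's English description precedes it below -/
import Mathlib

section
/- Let S ≥ 1, let g : ℕ → ℝ, and let A be the S×S real matrix (rows and columns indexed by 0,…,S−1) with entries A_{i,j} = g(j) for i ≤ j and A_{i,j} = 0 for i > j. Fix k with 0 ≤ k ≤ S−1 and assume g(k) ≠ 0. Define v ∈ ℝ^S by v_i = ∏_{j=0}^{i−1} (1 − g(j)/g(k)) for 0 ≤ i ≤ k (so v_0 = 1, the empty product) and v_i = 0 for k < i ≤ S−1. Then A v = g(k) · v; moreover, if g(j) ≠ g(k) for every j < k, then v_k ≠ 0, so v is a nonzero eigenvector of A for the eigenvalue g(k). -/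
open Finset

lemma stmt_0_aux (g : ℕ → ℝ) (k : ℕ) (hgk : g k ≠ 0) :
    ∀ d : ℕ, ∑ j ∈ Finset.Icc (k - d) k, g j * ∏ l ∈ Finset.range j, (1 - g l / g k)
      = g k * ∏ l ∈ Finset.range (k - d), (1 - g l / g k) := by
  intro d
  induction d with
  | zero => simp
  | succ d ih =>
    by_cases hd : d < k
    · set m := k - (d + 1) with hmdef
      have hm : m + 1 = k - d := by omega
      have hsplit : Finset.Icc m k = insert m (Finset.Icc (m + 1) k) := by
        rw [Finset.Icc_add_one_left_eq_Ioc, Finset.Ioc_insert_left (by omega)]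
      rw [hsplit, Finset.sum_insert (by simp), hm, ih, ← hm,
        Finset.prod_range_succ]
      have h2 : 1 - g m / g k = (g k - g m) / g k := by field_simp
      rw [h2]
      field_simp
      ring
    · have : k - (d + 1) = k - d := by omega
      rw [this, ih]

theorem stmt_0 (S : ℕ) (hS : 1 ≤ S) (g : ℕ → ℝ)
    (A : Matrix (Fin S) (Fin S) ℝ)
    (hA : ∀ i j : Fin S, A i j = if (i : ℕ) ≤ (j : ℕ) then g j else 0)
    (k : ℕ) (hk : k ≤ S - 1) (hgk : g k ≠ 0)
    (v : Fin S → ℝ)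
    (hv : ∀ i : Fin S,
      v i = if (i : ℕ) ≤ k then ∏ j ∈ Finset.range i, (1 - g j / g k) else 0) :
    A.mulVec v = g k • v ∧
      ((∀ j < k, g j ≠ g k) → v ⟨k, by omega⟩ ≠ 0) := by
  have hkS : k < S := by omega
  constructor
  · funext i
    simp only [Matrix.mulVec, dotProduct, Pi.smul_apply, smul_eq_mul]
    have hterm : ∀ j : Fin S, A i j * v j =
        if (j : ℕ) ∈ Finset.Icc (i : ℕ) k then
          g j * ∏ l ∈ Finset.range j, (1 - g l / g k) else 0 := by
      intro j
      rw [hA, hv]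
      by_cases h1 : (i : ℕ) ≤ (j : ℕ) <;> by_cases h2 : (j : ℕ) ≤ k <;>
        simp [h1, h2, Finset.mem_Icc]
    rw [Finset.sum_congr rfl (fun j _ => hterm j)]
    rw [Fin.sum_univ_eq_sum_range
      (fun j => if j ∈ Finset.Icc (i : ℕ) k then
        g j * ∏ l ∈ Finset.range j, (1 - g l / g k) else 0)]
    by_cases hik : (i : ℕ) ≤ k
    · rw [Finset.sum_ite_mem]
      have hsub : Finset.range S ∩ Finset.Icc (i : ℕ) k = Finset.Icc (i : ℕ) k := by
        apply Finset.inter_eq_right.mpr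
        intro x hx
        simp only [Finset.mem_Icc] at hx
        simp only [Finset.mem_range]
        omega
      rw [hsub]
      have := stmt_0_aux g k hgk (k - (i : ℕ))
      rw [show k - (k - (i : ℕ)) = (i : ℕ) by omega] at this
      rw [this, hv i, if_pos hik]
    · rw [hv i, if_neg hik, mul_zero]
      apply Finset.sum_eq_zero
      intro j _
      rw [if_neg]
      simp only [Finset.mem_Icc]
      omega
  · intro h
    rw [hv]
    simp only [le_refl, if_pos]
    apply Finset.prod_ne_zero_iff.mpr
    intro j hj
    simp only [Finset.mem_range] at hj
    have := h j hj
    intro hc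
    apply this
    field_simp at hc
    linarith
end

section
/- Let α, β ∈ ℝ and g(j) = ((1−α) + (1−β)j)/(j+1). Fix k ∈ ℕ and assume (1−α) + (1−β)k ≠ 0 (equivalently g(k) ≠ 0). Then for every i with 0 ≤ i ≤ k, ∏_{j=0}^{i−1} (1 − g(j)/g(k)) = C(k,i) · ((α−β)/((1−α)+(1−β)k))^i, where C(k,i) is the binomial coefficient. -/
open Finset

theorem stmt_5 (α β : ℝ) (g : ℕ → ℝ)
    (hg : ∀ j : ℕ, g j = ((1 - α) + (1 - β) * j) / (j + 1))
    (k : ℕ) (hk : (1 - α) + (1 - β) * k ≠ 0) :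
    ∀ i ≤ k, ∏ j ∈ Finset.range i, (1 - g j / g k) =
      (k.choose i : ℝ) * ((α - β) / ((1 - α) + (1 - β) * k)) ^ i := by
  intro i hi
  induction i with
  | zero => simp
  | succ n ih =>
    have hn : n ≤ k := Nat.le_of_succ_le hi
    have hn1 : (n : ℝ) + 1 ≠ 0 := by positivity
    have hk1 : (k : ℝ) + 1 ≠ 0 := by positivity
    have hterm : 1 - g n / g k =
        ((k : ℝ) - n) * (α - β) / ((n + 1) * ((1 - α) + (1 - β) * k)) := by
      rw [hg, hg]
      field_simp
      ring
    rw [Finset.prod_range_succ, ih hn, hterm]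
    have hcast : (k.choose (n+1) : ℝ) * (n + 1) = (k.choose n : ℝ) * ((k : ℝ) - n) := by
      have := Nat.choose_succ_right_eq k n
      have h2 : ((k.choose (n+1) * (n+1) : ℕ) : ℝ) = ((k.choose n * (k - n) : ℕ) : ℝ) := by
        exact_mod_cast congrArg (Nat.cast (R := ℝ)) this
      push_cast [Nat.cast_sub hn] at h2
      linarith
    have hch : (k.choose (n+1) : ℝ) = (k.choose n : ℝ) * ((k:ℝ) - n) / ((n:ℝ) + 1) := by
      field_simp
      linarith [hcast]
    rw [hch, pow_succ]
    field_simp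
end

section
/- Let α, β ∈ ℝ with β < 1 and α ≠ β, let S ≥ 1, let A be the S×S real matrix with A_{i,j} = g(j) for i ≤ j and A_{i,j} = 0 for i > j, where g(j) = ((1−α)+(1−β)j)/(j+1). Fix k with 0 ≤ k ≤ S−1 such that (1−α)+(1−β)k ≠ 0, and set p = (α−β)/((1−β)(k+1)). Define w ∈ ℝ^S by w_i = C(k,i) · p^i · (1−p)^{k−i} for 0 ≤ i ≤ k and w_i = 0 for k < i ≤ S−1. Then A w = g(k) · w and Σ_{i=0}^{S−1} w_i = 1; that is, the eigenvector of A for the eigenvalue g(k), normalized to sum to 1, is the probability mass function of the binomial distribution Bin(k, p). -/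
open Finset

theorem stmt_6 (α β : ℝ) (hβ : β < 1) (hab : α ≠ β) (S : ℕ) (hS : 1 ≤ S)
    (g : ℕ → ℝ) (hg : ∀ j : ℕ, g j = ((1 - α) + (1 - β) * j) / (j + 1))
    (A : Matrix (Fin S) (Fin S) ℝ)
    (hA : ∀ i j : Fin S, A i j = if (i : ℕ) ≤ (j : ℕ) then g j else 0)
    (k : ℕ) (hk : k ≤ S - 1) (hgk : (1 - α) + (1 - β) * k ≠ 0)
    (p : ℝ) (hp : p = (α - β) / ((1 - β) * (k + 1)))
    (w : Fin S → ℝ)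
    (hw : ∀ i : Fin S,
      w i = if (i : ℕ) ≤ k then
        (k.choose i : ℝ) * p ^ (i : ℕ) * (1 - p) ^ (k - (i : ℕ)) else 0) :
    A.mulVec w = g k • w ∧ ∑ i, w i = 1 := by
  have hc : (1 : ℝ) - β ≠ 0 := by linarith
  have hkS : k < S := by omega
  set b : ℕ → ℝ := fun i => (k.choose i : ℝ) * p ^ i * (1 - p) ^ (k - i) with hb
  have hq : 1 - p = ((1 - α) + (1 - β) * k) / ((1 - β) * (k + 1)) := by
    rw [hp]
    have h2 : (k : ℝ) + 1 ≠ 0 := by positivity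
    field_simp
    ring
  -- key telescoping identity
  have key : ∀ i : ℕ, i < k → g i * b i + g k * b (i + 1) = g k * b i := by
    intro i hik
    have hchR : (k.choose (i + 1) : ℝ) * ((i : ℝ) + 1) =
        (k.choose i : ℝ) * ((k : ℝ) - (i : ℝ)) := by
      have h := congrArg (Nat.cast : ℕ → ℝ) (Nat.choose_succ_right_eq k i)
      push_cast [Nat.cast_sub hik.le] at h
      linarith [h]
    have h1 : (i : ℝ) + 1 ≠ 0 := by positivity
    have h2 : (k : ℝ) + 1 ≠ 0 := by positivity
    have hsuff : g i * (k.choose i : ℝ) * (1 - p) + g k * (k.choose (i + 1) : ℝ) * p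
        = g k * (k.choose i : ℝ) * (1 - p) := by
      have hchR' : (k.choose (i + 1) : ℝ) =
          (k.choose i : ℝ) * ((k : ℝ) - (i : ℝ)) / ((i : ℝ) + 1) := by
        field_simp
        linarith [hchR]
      rw [hg i, hg k, hchR', hq, hp]
      field_simp
      ring
    have hd : k - i = (k - (i + 1)) + 1 := by omega
    simp only [hb]
    rw [hd, pow_succ, pow_succ]
    linear_combination (p ^ i * (1 - p) ^ (k - (i + 1))) * hsuff
  -- downward-telescoped partial sums
  have sumlem : ∀ d i : ℕ, i + d = k →
      ∑ j ∈ Finset.Icc i k, g j * b j = g k * b i := by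
    intro d
    induction d with
    | zero =>
      intro i h
      have : i = k := by omega
      subst this
      simp
    | succ d ih =>
      intro i h
      have hik : i < k := by omega
      have hins : Finset.Icc i k = insert i (Finset.Icc (i + 1) k) := by
        ext x
        simp only [Finset.mem_Icc, Finset.mem_insert]
        omega
      rw [hins, Finset.sum_insert (by simp), ih (i + 1) (by omega)]
      exact key i hik
  constructor
  · funext i
    have hAw : A.mulVec w i =
        ∑ j : Fin S, (if (i : ℕ) ≤ (j : ℕ) ∧ (j : ℕ) ≤ k then g j * b j else 0) := by
      rw [Matrix.mulVec, dotProduct]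
      refine Finset.sum_congr rfl fun j _ => ?_
      rw [hA i j, hw j]
      by_cases h1 : (i : ℕ) ≤ (j : ℕ) <;> by_cases h2 : (j : ℕ) ≤ k <;>
        simp [h1, h2, hb]
    rw [hAw]
    have hfin : (∑ j : Fin S,
        (if (i : ℕ) ≤ (j : ℕ) ∧ (j : ℕ) ≤ k then g j * b j else 0)) =
        ∑ n ∈ Finset.range S, (if (i : ℕ) ≤ n ∧ n ≤ k then g n * b n else 0) := by
      rw [Fin.sum_univ_eq_sum_range (fun n => if (i : ℕ) ≤ n ∧ n ≤ k then g n * b n else 0) S]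
    rw [hfin]
    rw [← Finset.sum_filter]
    have hsmul : (g k • w) i = g k * w i := rfl
    rw [hsmul, hw i]
    by_cases hik : (i : ℕ) ≤ k
    · have hfilter : (Finset.range S).filter (fun n => (i : ℕ) ≤ n ∧ n ≤ k) =
          Finset.Icc (i : ℕ) k := by
        ext x
        simp only [Finset.mem_filter, Finset.mem_range, Finset.mem_Icc]
        omega
      rw [hfilter, sumlem (k - (i : ℕ)) (i : ℕ) (by omega)]
      rw [if_pos hik]
    · have hfilter : (Finset.range S).filter (fun n => (i : ℕ) ≤ n ∧ n ≤ k) = ∅ := by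
        ext x
        simp only [Finset.mem_filter, Finset.mem_range, Finset.notMem_empty, iff_false]
        omega
      rw [hfilter, if_neg hik]
      simp
  · have hfin : (∑ i : Fin S, w i) =
        ∑ n ∈ Finset.range S, (if n ≤ k then b n else 0) := by
      rw [← Fin.sum_univ_eq_sum_range (fun n => if n ≤ k then b n else 0) S]
      refine Finset.sum_congr rfl fun j _ => ?_
      rw [hw j]
    rw [hfin, ← Finset.sum_filter]
    have hfilter : (Finset.range S).filter (fun n => n ≤ k) = Finset.range (k + 1) := by
      ext x
      simp only [Finset.mem_filter, Finset.mem_range]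
      omega
    rw [hfilter]
    have hbin := add_pow p (1 - p) k
    have : ∑ n ∈ Finset.range (k + 1), b n = (p + (1 - p)) ^ k := by
      rw [hbin]
      refine Finset.sum_congr rfl fun n _ => ?_
      simp only [hb]
      ring
    rw [this]
    norm_num
end

section
/- Let S ≥ 2, let α, β ∈ ℝ with β < α ≤ 1, let g(j) = ((1−α)+(1−β)j)/(j+1), and let A be the S×S real matrix with A_{i,j} = g(j) for i ≤ j and 0 for i > j. Let P* ∈ ℝ^S be any probability vector (nonnegative entries summing to 1) with P*_{S−1} > 0. Set p = (α−β)/((1−β)S) and s_n = Σ_{i=0}^{S−1} (A^n P*)_i. Then s_n ≠ 0 for all sufficiently large n, and A^n P*/s_n converges, as n → ∞, to the vector whose i-th entry is C(S−1, i) · p^i · (1−p)^{S−1−i}; that is, the iterated Katz partial summations converge to the binomial distribution Bin(S−1, (α−β)/((1−β)S)) regardless of the original parent distribution. -/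
/-!
The Katz matrix `A` is upper triangular with strictly increasing nonnegative diagonal
`g 0 < ⋯ < g (S - 1) =: λ`, and the binomial vector `V` is an eigenvector for `λ`: from
`g j V j = λ (V j - V (j + 1))` the row sums `∑_{j ≥ i} g j V j` telescope to `λ V i`.
Power iteration then gives `λ⁻ⁿ Aⁿ P → (P_{S-1} / V_{S-1}) V`, by descending induction on the
row: the last coordinate is constant, and every other one satisfies `x (n + 1) = r x n + d n`
with `|r| = g i / λ < 1` and a forcing term `d n` that converges by induction. Normalizing by
the total mass removes the scalar factor, which is nonzero because `P_{S-1} > 0`.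
-/

open Filter Finset
open scoped Matrix

section Recurrence

theorem tendsto_zero_of_le_mul_add {a b : ℕ → ℝ} {ρ : ℝ} (ha : ∀ n, 0 ≤ a n) (hρ₀ : 0 ≤ ρ)
    (hρ₁ : ρ < 1) (hab : ∀ n, a (n + 1) ≤ ρ * a n + b n) (hb : Tendsto b atTop (nhds 0)) :
    Tendsto a atTop (nhds 0) := by
  refine tendsto_order.2 ⟨fun ε hε => Eventually.of_forall fun n => hε.trans_le (ha n),
    fun ε hε => ?_⟩
  have hδ : 0 < ε * (1 - ρ) / 2 := by nlinarith
  obtain ⟨N, hN⟩ := eventually_atTop.1 ((tendsto_order.1 hb).2 _ hδ)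
  -- past `N` the forcing term is below `ε (1 - ρ) / 2`, whose geometric accumulation is `ε / 2`
  have hbound : ∀ k, a (N + k) ≤ ρ ^ k * a N + ε / 2 := by
    intro k
    induction k with
    | zero => simp only [add_zero, pow_zero, one_mul]; linarith
    | succ k ih =>
      calc a (N + (k + 1)) ≤ ρ * a (N + k) + b (N + k) := hab (N + k)
        _ ≤ ρ * (ρ ^ k * a N + ε / 2) + ε * (1 - ρ) / 2 := by
          gcongr
          exact (hN _ (Nat.le_add_right N k)).le
        _ = ρ ^ (k + 1) * a N + ε / 2 := by ring
  have hgeom : Tendsto (fun k => ρ ^ k * a N) atTop (nhds 0) := by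
    simpa using (tendsto_pow_atTop_nhds_zero_of_lt_one hρ₀ hρ₁).mul_const (a N)
  obtain ⟨K, hK⟩ := eventually_atTop.1 ((tendsto_order.1 hgeom).2 _ (half_pos hε))
  filter_upwards [eventually_ge_atTop (N + K)] with n hn
  obtain ⟨k, rfl⟩ := Nat.exists_eq_add_of_le (le_of_add_le_left hn)
  linarith [hbound k, hK k (by omega)]

variable {𝕜 : Type*} [NormedField 𝕜]

theorem tendsto_of_eq_mul_add {x d : ℕ → 𝕜} {r L : 𝕜} (hr : ‖r‖ < 1)
    (hx : ∀ n, x (n + 1) = r * x n + d n) (hd : Tendsto d atTop (nhds ((1 - r) * L))) :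
    Tendsto x atTop (nhds L) := by
  rw [tendsto_iff_norm_sub_tendsto_zero] at hd ⊢
  refine tendsto_zero_of_le_mul_add (fun n => norm_nonneg _) (norm_nonneg r) hr (fun n => ?_) hd
  calc ‖x (n + 1) - L‖ = ‖r * (x n - L) + (d n - (1 - r) * L)‖ := by rw [hx]; ring_nf
    _ ≤ ‖r‖ * ‖x n - L‖ + ‖d n - (1 - r) * L‖ := by
      rw [← norm_mul]; exact norm_add_le _ _

end Recurrence

section PowerIteration

variable {𝕜 ι : Type*} [NormedField 𝕜] [Fintype ι]

theorem eventually_sum_ne_zero_and_tendsto_inv_sum_smul {x : ℕ → ι → 𝕜} {a : ℕ → 𝕜} {c : 𝕜}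
    {w : ι → 𝕜} (ha : ∀ n, a n ≠ 0) (hx : Tendsto (fun n => (a n)⁻¹ • x n) atTop (nhds (c • w)))
    (hc : c ≠ 0) (hw : ∑ i, w i = 1) :
    (∀ᶠ n in atTop, ∑ i, x n i ≠ 0) ∧ Tendsto (fun n => (∑ i, x n i)⁻¹ • x n) atTop (nhds w) := by
  have hcw : ∑ i, (c • w) i = c := by simp [← mul_sum, hw]
  have hsum : Tendsto (fun n => (a n)⁻¹ * ∑ i, x n i) atTop (nhds c) := by
    rw [← hcw]
    simpa [mul_sum] using tendsto_finsetSum univ fun i _ => tendsto_pi_nhds.1 hx i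
  have hne := hsum.eventually_ne hc
  refine ⟨hne.mono fun n hn h => hn (by rw [h, mul_zero]), ?_⟩
  have hlim := (hsum.inv₀ hc).smul hx
  rw [inv_smul_smul₀ hc] at hlim
  refine hlim.congr' (hne.mono fun n hn => ?_)
  rw [smul_smul, mul_inv, inv_inv, mul_right_comm, mul_inv_cancel₀ (ha n), one_mul]

variable [LinearOrder ι]

theorem Matrix.IsUpperTriangular.mulVec_apply {A : Matrix ι ι 𝕜} (hA : A.IsUpperTriangular)
    (w : ι → 𝕜) (i : ι) : (A *ᵥ w) i = A i i * w i + ∑ j with i < j, A i j * w j := by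
  rw [Matrix.mulVec, dotProduct, ← sum_filter_add_sum_filter_not univ (i < ·), add_comm]
  congr 1
  refine sum_eq_single_of_mem i (by simp) fun j hj hji => ?_
  rw [hA ((not_lt.1 (mem_filter.1 hj).2).lt_of_ne hji), zero_mul]

theorem Matrix.IsUpperTriangular.tendsto_inv_pow_smul_pow_mulVec {A : Matrix ι ι 𝕜}
    (hA : A.IsUpperTriangular) {t : ι} (ht : IsTop t) (hAt : A t t ≠ 0)
    (hdiag : ∀ i ≠ t, ‖A i i‖ < ‖A t t‖) {v : ι → 𝕜} (hv : A *ᵥ v = A t t • v) (hvt : v t ≠ 0)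
    (P : ι → 𝕜) :
    Tendsto (fun n => (A t t ^ n)⁻¹ • (A ^ n *ᵥ P)) atTop (nhds ((P t / v t) • v)) := by
  set u := fun n => (A t t ^ n)⁻¹ • (A ^ n *ᵥ P)
  have hu : ∀ n i, u (n + 1) i = (A t t)⁻¹ * (A i i * u n i + ∑ j with i < j, A i j * u n j) := by
    intro n i
    rw [← hA.mulVec_apply]
    simp only [u, pow_succ', ← Matrix.mulVec_mulVec, Matrix.mulVec_smul, mul_inv,
      Pi.smul_apply, smul_eq_mul, mul_assoc]
  rw [tendsto_pi_nhds]
  intro i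
  induction i using WellFoundedGT.induction with
  | _ i ih =>
  by_cases hi : i = t
  · subst hi
    have hconst : ∀ n, u n i = P i := by
      intro n
      induction n with
      | zero => simp [u]
      | succ n ihn =>
        rw [hu, filter_false_of_mem fun j _ => (ht j).not_gt, sum_empty, add_zero, ihn,
          inv_mul_cancel_left₀ hAt]
    simp [hconst, div_mul_cancel₀ _ hvt]
  · have hvi : A t t * v i = A i i * v i + ∑ j with i < j, A i j * v j := by
      rw [← hA.mulVec_apply, hv, Pi.smul_apply, smul_eq_mul]
    refine tendsto_of_eq_mul_add (r := A i i / A t t)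
      (d := fun n => (A t t)⁻¹ * ∑ j with i < j, A i j * u n j) ?_ (fun n => ?_) ?_
    · rw [norm_div, div_lt_one (norm_pos_iff.2 hAt)]
      exact hdiag i hi
    · rw [hu]; ring
    · have hlim := (tendsto_finsetSum ({j | i < j} : Finset ι) fun j hj =>
        (ih j (mem_filter.1 hj).2).const_mul (A i j)).const_mul (A t t)⁻¹
      convert hlim using 2
      simp only [Pi.smul_apply, smul_eq_mul, mul_left_comm _ (P t / v t), ← mul_sum]
      rw [eq_sub_of_add_eq' hvi.symm]
      field_simp

end PowerIteration

section Binomial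

def binomialMass (m : ℕ) (p : ℝ) (j : ℕ) : ℝ :=
  m.choose j * p ^ j * (1 - p) ^ (m - j)

variable {m : ℕ} {p : ℝ}

theorem binomialMass_eq_zero_of_lt {j : ℕ} (h : m < j) : binomialMass m p j = 0 := by
  simp [binomialMass, Nat.choose_eq_zero_of_lt h]

theorem sum_range_binomialMass : ∑ j ∈ range (m + 1), binomialMass m p j = 1 := by
  have h := add_pow p (1 - p) m
  rw [add_sub_cancel, one_pow] at h
  rw [h]
  exact sum_congr rfl fun j _ => by simp only [binomialMass]; ring

theorem sum_fin_binomialMass {S : ℕ} (hS : S ≠ 0) :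
    ∑ i : Fin S, binomialMass (S - 1) p i = 1 := by
  rw [Fin.sum_univ_eq_sum_range (binomialMass (S - 1) p)]
  simpa only [Nat.sub_add_cancel (Nat.pos_of_ne_zero hS)] using
    sum_range_binomialMass (m := S - 1) (p := p)

theorem binomialMass_self : binomialMass m p m = p ^ m := by
  simp [binomialMass]

theorem binomialMass_succ (j : ℕ) :
    (1 - p) * (j + 1) * binomialMass m p (j + 1) = p * (m - j) * binomialMass m p j := by
  rcases lt_or_ge j m with hj | hj
  · have hchoose : (m.choose (j + 1) : ℝ) * (j + 1) = m.choose j * (m - j) := by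
      have := congrArg (Nat.cast : ℕ → ℝ) (Nat.choose_succ_right_eq m j)
      push_cast [Nat.cast_sub hj.le] at this
      exact this
    obtain ⟨k, hk⟩ := Nat.exists_eq_add_of_lt hj
    simp only [binomialMass, hk, show j + k + 1 - j = k + 1 by omega,
      show j + k + 1 - (j + 1) = k by omega] at hchoose ⊢
    linear_combination p ^ (j + 1) * (1 - p) ^ (k + 1) * hchoose
  · rw [binomialMass_eq_zero_of_lt (by omega)]
    rcases hj.eq_or_lt with rfl | hj
    · simp
    · simp [binomialMass_eq_zero_of_lt hj]

theorem mul_binomialMass_eq {γ : ℝ} {g : ℕ → ℝ} {j : ℕ}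
    (hg : g j * (j + 1) = γ * (j + 1 - p * (m + 1))) :
    g j * binomialMass m p j = γ * (1 - p) * (binomialMass m p j - binomialMass m p (j + 1)) := by
  refine mul_left_cancel₀ (Nat.cast_add_one_ne_zero j) ?_
  linear_combination binomialMass m p j * hg + γ * binomialMass_succ (m := m) (p := p) j

theorem sum_Ico_mul_binomialMass {γ : ℝ} {g : ℕ → ℝ}
    (hg : ∀ j : ℕ, g j * (j + 1) = γ * (j + 1 - p * (m + 1))) {i : ℕ} (hi : i ≤ m + 1) :
    ∑ j ∈ Ico i (m + 1), g j * binomialMass m p j = γ * (1 - p) * binomialMass m p i := by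
  simp only [mul_binomialMass_eq (hg _), ← mul_sum, ← neg_sub (binomialMass m p (_ + 1)),
    sum_neg_distrib, sum_Ico_sub _ hi, binomialMass_eq_zero_of_lt (Nat.lt_succ_self m)]
  ring

end Binomial

section Katz

noncomputable def katzWeight (α β : ℝ) (j : ℕ) : ℝ := ((1 - α) + (1 - β) * j) / (j + 1)

noncomputable def katzParameter (α β : ℝ) (S : ℕ) : ℝ := (α - β) / ((1 - β) * S)

noncomputable def katzMatrix (α β : ℝ) (S : ℕ) : Matrix (Fin S) (Fin S) ℝ :=
  Matrix.of fun i j => if (i : ℕ) ≤ j then katzWeight α β j else 0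

variable {α β p : ℝ} {S : ℕ}

theorem one_sub_mul_katzParameter_mul (hβ : β ≠ 1) (hS : S ≠ 0) :
    (1 - β) * katzParameter α β S * S = α - β := by
  rw [katzParameter]
  field_simp [sub_ne_zero.2 hβ.symm]

theorem katzParameter_pos (hβα : β < α) (hα : α ≤ 1) (hS : S ≠ 0) : 0 < katzParameter α β S :=
  div_pos (sub_pos.2 hβα) (mul_pos (by linarith) (by positivity))

theorem katzParameter_lt_one (hβα : β < α) (hα : α ≤ 1) (hS : 2 ≤ S) :
    katzParameter α β S < 1 := by
  have hS₂ : (2 : ℝ) ≤ S := by exact_mod_cast hS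
  rw [katzParameter, div_lt_one (mul_pos (by linarith) (by linarith))]
  nlinarith [mul_nonneg (sub_nonneg.2 (hβα.trans_le hα).le) (sub_nonneg.2 hS₂)]

theorem katzWeight_nonneg (hα : α ≤ 1) (hβ : β ≤ 1) (j : ℕ) : 0 ≤ katzWeight α β j :=
  div_nonneg (add_nonneg (sub_nonneg.2 hα) (mul_nonneg (sub_nonneg.2 hβ) j.cast_nonneg))
    j.cast_add_one_pos.le

theorem katzWeight_strictMono (hβα : β < α) : StrictMono (katzWeight α β) := by
  intro i k hik
  have hik' : (i : ℝ) < k := by exact_mod_cast hik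
  rw [katzWeight, katzWeight, div_lt_div_iff₀ i.cast_add_one_pos k.cast_add_one_pos]
  nlinarith [mul_pos (sub_pos.2 hik') (sub_pos.2 hβα)]

theorem katzWeight_mul_succ (hp : (1 - β) * p * S = α - β) (j : ℕ) :
    katzWeight α β j * (j + 1) = (1 - β) * (j + 1 - p * S) := by
  rw [katzWeight, div_mul_cancel₀ _ j.cast_add_one_ne_zero]
  linear_combination hp

theorem katzWeight_pred (hS : S ≠ 0) (hp : (1 - β) * p * S = α - β) :
    katzWeight α β (S - 1) = (1 - β) * (1 - p) := by
  have hS₁ : ((S - 1 : ℕ) : ℝ) + 1 = S := by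
    exact_mod_cast Nat.sub_add_cancel (Nat.pos_of_ne_zero hS)
  refine mul_right_cancel₀ (Nat.cast_add_one_ne_zero (S - 1)) ?_
  rw [katzWeight_mul_succ hp, hS₁]
  ring

theorem katzMatrix_isUpperTriangular : (katzMatrix α β S).IsUpperTriangular :=
  fun _ _ hji => if_neg (not_le.2 hji)

theorem katzMatrix_apply_self (i : Fin S) : katzMatrix α β S i i = katzWeight α β i :=
  if_pos le_rfl

theorem norm_katzMatrix_apply_self_lt (hβα : β < α) (hα : α ≤ 1) {i j : Fin S} (hij : i < j) :
    ‖katzMatrix α β S i i‖ < ‖katzMatrix α β S j j‖ := by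
  simp only [katzMatrix_apply_self,
    Real.norm_of_nonneg (katzWeight_nonneg hα (hβα.trans_le hα).le _)]
  exact katzWeight_strictMono hβα hij

theorem katzMatrix_mulVec_binomialMass (hS : S ≠ 0) (hp : (1 - β) * p * S = α - β) :
    katzMatrix α β S *ᵥ (fun i : Fin S => binomialMass (S - 1) p i) =
      ((1 - β) * (1 - p)) • fun i : Fin S => binomialMass (S - 1) p i := by
  have hS₁ : S - 1 + 1 = S := Nat.sub_add_cancel (Nat.pos_of_ne_zero hS)
  have hg (j : ℕ) : katzWeight α β j * (j + 1) = (1 - β) * (j + 1 - p * ((S - 1 : ℕ) + 1)) := by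
    rw [katzWeight_mul_succ hp, ← Nat.cast_add_one (S - 1), hS₁]
  ext i
  have hIco : (range S).filter ((i : ℕ) ≤ ·) = Ico (i : ℕ) (S - 1 + 1) := by
    ext j; simp only [mem_filter, mem_range, mem_Ico]; omega
  rw [Matrix.mulVec, dotProduct, Pi.smul_apply, smul_eq_mul]
  simp only [katzMatrix, Matrix.of_apply, ite_mul, zero_mul]
  rw [Fin.sum_univ_eq_sum_range (fun j => if (i : ℕ) ≤ j then
      katzWeight α β j * binomialMass (S - 1) p j else 0), ← sum_filter, hIco,
    sum_Ico_mul_binomialMass hg (by omega)]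

end Katz

theorem stmt_7 (S : ℕ) (hS : 2 ≤ S) (α β : ℝ) (hβα : β < α) (hα : α ≤ 1)
    (g : ℕ → ℝ) (hg : ∀ j : ℕ, g j = ((1 - α) + (1 - β) * j) / (j + 1))
    (A : Matrix (Fin S) (Fin S) ℝ)
    (hA : ∀ i j : Fin S, A i j = if (i : ℕ) ≤ (j : ℕ) then g j else 0)
    (P : Fin S → ℝ)
    (hPlast : 0 < P ⟨S - 1, by omega⟩)
    (p : ℝ) (hp : p = (α - β) / ((1 - β) * S))
    (s : ℕ → ℝ) (hs : ∀ n, s n = ∑ i, (A ^ n).mulVec P i) :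
    (∀ᶠ n in atTop, s n ≠ 0) ∧
      Tendsto (fun n : ℕ => (s n)⁻¹ • (A ^ n).mulVec P) atTop
        (nhds (fun i : Fin S =>
          ((S - 1).choose i : ℝ) * p ^ (i : ℕ) * (1 - p) ^ (S - 1 - (i : ℕ)))) := by
  obtain rfl : s = fun n => ∑ i, (A ^ n *ᵥ P) i := funext hs
  obtain rfl : g = katzWeight α β := funext hg
  obtain rfl : A = katzMatrix α β S := Matrix.ext hA
  obtain rfl : p = katzParameter α β S := hp
  set t : Fin S := ⟨S - 1, by omega⟩
  have ht : IsTop t := fun i => Fin.le_def.2 (Nat.le_sub_one_of_lt i.isLt)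
  have hS₀ : S ≠ 0 := by omega
  have hβ : β ≠ 1 := (hβα.trans_le hα).ne
  have hp₀ := katzParameter_pos hβα hα hS₀
  have hpS := one_sub_mul_katzParameter_mul (α := α) hβ hS₀
  have hAtt : katzMatrix α β S t t = (1 - β) * (1 - katzParameter α β S) :=
    (katzMatrix_apply_self t).trans (katzWeight_pred hS₀ hpS)
  have hAt₀ : katzMatrix α β S t t ≠ 0 := by
    rw [hAtt]
    exact mul_ne_zero (sub_ne_zero.2 hβ.symm) (sub_ne_zero.2 (katzParameter_lt_one hβα hα hS).ne')
  have hV := katzMatrix_mulVec_binomialMass hS₀ hpS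
  rw [← hAtt] at hV
  have hVt : binomialMass (S - 1) (katzParameter α β S) t ≠ 0 := by
    rw [binomialMass_self]; exact pow_ne_zero _ hp₀.ne'
  have hlim := katzMatrix_isUpperTriangular.tendsto_inv_pow_smul_pow_mulVec ht hAt₀
    (fun i hi => norm_katzMatrix_apply_self_lt hβα hα ((ht i).lt_of_ne hi)) hV hVt P
  exact eventually_sum_ne_zero_and_tendsto_inv_sum_smul (fun n => pow_ne_zero n hAt₀) hlim
    (div_ne_zero hPlast.ne' hVt) (sum_fin_binomialMass hS₀)
end

section
/- Let S ≥ 2, let α, β ∈ ℝ with β < 1 < α, and suppose |1−α| > |((1−α)+(1−β)(S−1))/S| (which holds in particular when α+β ≥ 2, or when α+β < 2 and S < (α−β)/(2−α−β)). Let g(j) = ((1−α)+(1−β)j)/(j+1) and let A be the S×S real matrix with A_{i,j} = g(j) for i ≤ j and 0 for i > j. Let P* ∈ ℝ^S be a probability vector that does not lie in the span of the eigenspaces of A corresponding to the eigenvalues g(1), …, g(S−1). Set s_n = Σ_{i=0}^{S−1} (A^n P*)_i. Then s_n ≠ 0 for all sufficiently large n, and A^n P*/s_n converges, as n → ∞,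 to the standard basis vector e_0 = (1, 0, …, 0), i.e. to the deterministic distribution concentrated at 0. -/
open Filter Finset

/-- Auxiliary sequence: (reversed) coordinates of the eigenvector of the Katz matrix
for the eigenvalue `g k`. -/
noncomputable def katzU (g : ℕ → ℝ) (k : ℕ) : ℕ → ℝ
  | 0 => 1
  | d + 1 => g k * katzU g k d / (g k - g (k - (d + 1)))

lemma katzU_zero (g : ℕ → ℝ) (k : ℕ) : katzU g k 0 = 1 := rfl

lemma katz_sum (g : ℕ → ℝ) (k : ℕ) (hgk : ∀ i, i < k → g i ≠ g k) :
    ∀ d, d ≤ k → ∑ e ∈ Finset.range (d + 1), g (k - e) * katzU g k e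
      = g k * katzU g k d := by
  intro d
  induction d with
  | zero => intro _; simp [katzU]
  | succ d ih =>
    intro hdk
    have hd : d ≤ k := by omega
    rw [Finset.sum_range_succ, ih hd]
    have hne : g k - g (k - (d + 1)) ≠ 0 := by
      have : g (k - (d + 1)) ≠ g k := hgk _ (by omega)
      intro h; apply this; linarith [sub_eq_zero.mp h]
    have hU : katzU g k (d + 1) = g k * katzU g k d / (g k - g (k - (d + 1))) := rfl
    rw [hU]
    field_simp
    ring

theorem stmt_14 (S : ℕ) (hS : 2 ≤ S) (α β : ℝ) (hβ : β < 1) (hα : 1 < α)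
    (hdom : |(1 : ℝ) - α| > |((1 - α) + (1 - β) * ((S : ℝ) - 1)) / S|)
    (g : ℕ → ℝ) (hg : ∀ j : ℕ, g j = ((1 - α) + (1 - β) * j) / (j + 1))
    (A : Matrix (Fin S) (Fin S) ℝ)
    (hA : ∀ i j : Fin S, A i j = if (i : ℕ) ≤ (j : ℕ) then g j else 0)
    (P : Fin S → ℝ) (hPnn : ∀ i, 0 ≤ P i) (hPsum : ∑ i, P i = 1)
    (hPspan : P ∉ Submodule.span ℝ
      {u : Fin S → ℝ | ∃ j : Fin S, (j : ℕ) ≠ 0 ∧ A.mulVec u = g j • u})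
    (s : ℕ → ℝ) (hs : ∀ n, s n = ∑ i, (A ^ n).mulVec P i) :
    (∀ᶠ n in atTop, s n ≠ 0) ∧
      Tendsto (fun n : ℕ => (s n)⁻¹ • (A ^ n).mulVec P) atTop
        (nhds (Pi.single (⟨0, by omega⟩ : Fin S) (1 : ℝ))) := by
  -- basic facts about g
  have hαβ : β < α := lt_trans hβ hα
  have hmono : ∀ a b : ℕ, a < b → g a < g b := by
    intro a b hab
    have hab' : (a : ℝ) < b := by exact_mod_cast hab
    rw [hg a, hg b, div_lt_div_iff₀ (by positivity) (by positivity)]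
    nlinarith [mul_pos (sub_pos.mpr hαβ) (sub_pos.mpr hab')]
  have hg0 : g 0 = 1 - α := by rw [hg 0]; push_cast; ring
  have hg0neg : g 0 < 0 := by rw [hg0]; linarith
  have hg0ne : g 0 ≠ 0 := ne_of_lt hg0neg
  have hgS1 : |g (S - 1)| < |g 0| := by
    have h1 : ((S - 1 : ℕ) : ℝ) = (S : ℝ) - 1 := by
      have : (1:ℕ) ≤ S := by omega
      push_cast [Nat.cast_sub this]; ring
    have h2 : g (S - 1) = ((1 - α) + (1 - β) * ((S : ℝ) - 1)) / S := by
      rw [hg (S - 1), h1]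
      congr 1
      have : (S:ℝ) - 1 + 1 = S := by ring
      rw [this]
    rw [h2, hg0]
    exact hdom
  have hlt : ∀ k : Fin S, (k : ℕ) ≠ 0 → |g (k : ℕ)| < |g 0| := by
    intro k hk
    have h1 : g 0 < g (k : ℕ) := hmono 0 _ (Nat.pos_of_ne_zero hk)
    have h2 : g (k : ℕ) ≤ g (S - 1) := by
      rcases lt_or_eq_of_le (show (k : ℕ) ≤ S - 1 by have := k.isLt; omega) with h | h
      · exact le_of_lt (hmono _ _ h)
      · rw [h]
    rcases le_or_gt (g (k : ℕ)) 0 with h3 | h3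
    · rw [abs_of_nonpos h3, abs_of_neg hg0neg]; linarith
    · have : |g (S - 1)| < |g 0| := hgS1
      calc |g (k : ℕ)| = g (k : ℕ) := abs_of_pos h3
        _ ≤ g (S - 1) := h2
        _ ≤ |g (S - 1)| := le_abs_self _
        _ < |g 0| := hgS1
  have hgne : ∀ k : ℕ, ∀ i, i < k → g i ≠ g k := fun k i h => ne_of_lt (hmono i k h)
  -- the eigenvectors
  set v : Fin S → Fin S → ℝ :=
    fun k i => if (i : ℕ) ≤ (k : ℕ) then katzU g (k : ℕ) ((k : ℕ) - (i : ℕ)) else 0 with hvdef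
  set k0 : Fin S := (⟨0, by omega⟩ : Fin S) with hk0def
  have hvzero : ∀ k i : Fin S, (k : ℕ) < (i : ℕ) → v k i = 0 := by
    intro k i h
    exact if_neg (by omega)
  have hvpos : ∀ k i : Fin S, (i : ℕ) ≤ (k : ℕ) → v k i = katzU g (k : ℕ) ((k : ℕ) - (i : ℕ)) := by
    intro k i h
    exact if_pos h
  have hvdiag : ∀ k : Fin S, v k k = 1 := by
    intro k
    rw [hvpos k k le_rfl, Nat.sub_self]
    exact katzU_zero g _
  have hv : ∀ k : Fin S, A.mulVec (v k) = g (k : ℕ) • v k := by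
    intro k
    funext i
    have hsum := katz_sum g (k : ℕ) (hgne _)
    show ∑ j, A i j * v k j = g (k : ℕ) * v k i
    rcases le_or_gt (i : ℕ) (k : ℕ) with hik | hik
    · -- the main case
      set d : ℕ := (k : ℕ) - (i : ℕ) with hd
      have step1 : ∀ j : Fin S, A i j * v k j =
          (fun m : ℕ => if (i : ℕ) ≤ m ∧ m ≤ (k : ℕ)
            then g m * katzU g (k : ℕ) ((k : ℕ) - m) else 0) (j : ℕ) := by
        intro j
        simp only [hA, hvdef]
        by_cases h1 : (i : ℕ) ≤ (j : ℕ) <;> by_cases h2 : (j : ℕ) ≤ (k : ℕ) <;>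
          simp [h1, h2]
      have e1 : ∑ j, A i j * v k j = ∑ m ∈ Finset.range S,
          (if (i : ℕ) ≤ m ∧ m ≤ (k : ℕ) then g m * katzU g (k : ℕ) ((k : ℕ) - m) else 0) := by
        rw [← Fin.sum_univ_eq_sum_range (fun m : ℕ => if (i : ℕ) ≤ m ∧ m ≤ (k : ℕ)
          then g m * katzU g (k : ℕ) ((k : ℕ) - m) else 0) S]
        exact Finset.sum_congr rfl fun j _ => step1 j
      rw [e1]
      have step2 : ∑ m ∈ Finset.range S,
          (if (i : ℕ) ≤ m ∧ m ≤ (k : ℕ) then g m * katzU g (k : ℕ) ((k : ℕ) - m) else 0)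
          = ∑ m ∈ Finset.range ((k : ℕ) + 1),
          (if (i : ℕ) ≤ m ∧ m ≤ (k : ℕ) then g m * katzU g (k : ℕ) ((k : ℕ) - m) else 0) := by
        refine (Finset.sum_subset ?_ ?_).symm
        · exact Finset.range_subset_range.mpr (by have := k.isLt; omega)
        · intro m _ hm
          rw [Finset.mem_range] at hm
          have : ¬ ((i : ℕ) ≤ m ∧ m ≤ (k : ℕ)) := by omega
          simp [this]
      rw [step2, ← Finset.sum_range_reflect]
      have step3 : ∀ e ∈ Finset.range ((k : ℕ) + 1),
          (if (i : ℕ) ≤ (k : ℕ) + 1 - 1 - e ∧ (k : ℕ) + 1 - 1 - e ≤ (k : ℕ)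
            then g ((k : ℕ) + 1 - 1 - e) * katzU g (k : ℕ) ((k : ℕ) - ((k : ℕ) + 1 - 1 - e)) else 0)
          = (if e ≤ d then g ((k : ℕ) - e) * katzU g (k : ℕ) e else 0) := by
        intro e he
        rw [Finset.mem_range] at he
        have h1 : (k : ℕ) + 1 - 1 - e = (k : ℕ) - e := by omega
        have h2 : ((i : ℕ) ≤ (k : ℕ) - e ∧ (k : ℕ) - e ≤ (k : ℕ)) ↔ e ≤ d := by omega
        have h3 : (k : ℕ) - ((k : ℕ) - e) = e := by omega
        rw [h1, h3]
        by_cases h : e ≤ d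
        · rw [if_pos (h2.mpr h), if_pos h]
        · rw [if_neg (fun hc => h (h2.mp hc)), if_neg h]
      rw [Finset.sum_congr rfl step3]
      have step4 : ∑ e ∈ Finset.range ((k : ℕ) + 1),
          (if e ≤ d then g ((k : ℕ) - e) * katzU g (k : ℕ) e else 0)
          = ∑ e ∈ Finset.range (d + 1), g ((k : ℕ) - e) * katzU g (k : ℕ) e := by
        have hsub : Finset.range (d + 1) ⊆ Finset.range ((k : ℕ) + 1) :=
          Finset.range_subset_range.mpr (by omega)
        have hzero : ∀ m ∈ Finset.range ((k : ℕ) + 1), m ∉ Finset.range (d + 1) →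
            (if m ≤ d then g ((k : ℕ) - m) * katzU g (k : ℕ) m else 0) = 0 := by
          intro m _ hm
          rw [Finset.mem_range] at hm
          rw [if_neg (by omega)]
        rw [← Finset.sum_subset hsub hzero]
        refine Finset.sum_congr rfl fun e he => ?_
        rw [Finset.mem_range] at he
        rw [if_pos (by omega)]
      rw [step4, hsum d (by omega)]
      rw [hvpos k i hik]
    · -- i > k : both sides vanish
      rw [hvzero k i hik, mul_zero]
      refine Finset.sum_eq_zero fun j _ => ?_
      rcases le_or_gt (i : ℕ) (j : ℕ) with h1 | h1
      · rw [hvzero k j (lt_of_lt_of_le hik h1), mul_zero]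
      · rw [hA, if_neg (Nat.not_le.mpr h1), zero_mul]
  -- the matrix of eigenvectors and the coefficients of P
  set B : Matrix (Fin S) (Fin S) ℝ := Matrix.of (fun i k => v k i) with hBdef
  have hBtri : B.BlockTriangular id := by
    intro i k hik
    simp only [id] at hik
    exact hvzero k i hik
  have hBdiag : ∀ i : Fin S, B i i = 1 := fun i => hvdiag i
  have hBdet : IsUnit B.det := by
    rw [Matrix.det_of_upperTriangular hBtri]
    simp [hBdiag]
  set c : Fin S → ℝ := B⁻¹.mulVec P with hcdef
  have hP : P = ∑ k, c k • v k := by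
    have h1 : B.mulVec c = P := by
      rw [hcdef, Matrix.mulVec_mulVec, Matrix.mul_nonsing_inv _ hBdet, Matrix.one_mulVec]
    funext i
    rw [← h1]
    show B.mulVec c i = (∑ k, c k • v k) i
    rw [Finset.sum_apply]
    simp only [Pi.smul_apply, smul_eq_mul]
    simp only [Matrix.mulVec, dotProduct, hBdef, Matrix.of_apply]
    exact Finset.sum_congr rfl fun k _ => mul_comm _ _
  -- iterates
  have hAn : ∀ n : ℕ, (A ^ n).mulVec P = ∑ k, (c k * g (k : ℕ) ^ n) • v k := by
    intro n
    induction n with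
    | zero => simpa [Matrix.one_mulVec] using hP
    | succ n ih =>
      rw [pow_succ', ← Matrix.mulVec_mulVec, ih]
      rw [show A.mulVec (∑ k, (c k * g (k:ℕ) ^ n) • v k)
          = A.mulVecLin (∑ k, (c k * g (k:ℕ) ^ n) • v k) from rfl]
      rw [map_sum]
      refine Finset.sum_congr rfl fun k _ => ?_
      rw [map_smul, Matrix.mulVecLin_apply, hv k, smul_smul]
      rw [show c k * g (k:ℕ) ^ n * g (k:ℕ) = c k * g (k:ℕ) ^ (n+1) by ring]
  -- c k0 ≠ 0
  have hk0val : (k0 : ℕ) = 0 := rfl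
  have hvk0 : v k0 = Pi.single k0 (1:ℝ) := by
    funext i
    by_cases h : i = k0
    · subst h
      rw [hvdiag, Pi.single_eq_same]
    · have hne : (i : ℕ) ≠ 0 := fun hc => h (Fin.ext (by rw [hc, hk0val]))
      rw [hvzero k0 i (by omega), Pi.single_eq_of_ne h]
  have hc0 : c k0 ≠ 0 := by
    intro h0
    apply hPspan
    rw [hP]
    refine Submodule.sum_mem _ fun k _ => ?_
    by_cases hk : k = k0
    · rw [hk, h0]; simp
    · refine Submodule.smul_mem _ _ (Submodule.subset_span ?_)
      refine ⟨k, fun hc => hk (Fin.ext (by rw [hc, hk0val])), hv k⟩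
  -- the normalized iterates converge
  have hgk0 : g ((k0 : ℕ)) = g 0 := rfl
  have hpowne : ∀ n : ℕ, g 0 ^ n ≠ 0 := fun n => pow_ne_zero n hg0ne
  have hXn : ∀ n : ℕ, (g 0 ^ n)⁻¹ • (A ^ n).mulVec P
      = ∑ k, (c k * (g (k : ℕ) / g 0) ^ n) • v k := by
    intro n
    rw [hAn n, Finset.smul_sum]
    refine Finset.sum_congr rfl fun k _ => ?_
    rw [smul_smul]
    congr 1
    rw [div_pow]
    field_simp
  have htend : Tendsto (fun n : ℕ => (g 0 ^ n)⁻¹ • (A ^ n).mulVec P) atTop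
      (nhds (c k0 • v k0)) := by
    have h1 : Tendsto (fun n : ℕ => ∑ k, (c k * (g (k : ℕ) / g 0) ^ n) • v k) atTop
        (nhds (∑ k, (if k = k0 then c k0 • v k0 else 0))) := by
      refine tendsto_finset_sum _ fun k _ => ?_
      by_cases hk : k = k0
      · subst hk
        have : ∀ n : ℕ, (c k0 * (g ((k0 : ℕ)) / g 0) ^ n) • v k0 = c k0 • v k0 := by
          intro n
          rw [hgk0, div_self hg0ne, one_pow, mul_one]
        rw [if_pos rfl]
        exact tendsto_const_nhds.congr fun n => (this n).symm
      · rw [if_neg hk]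
        have hkne : (k : ℕ) ≠ 0 := fun hc => hk (Fin.ext (by rw [hc, hk0val]))
        have habs : ‖g (k : ℕ) / g 0‖ < 1 := by
          rw [Real.norm_eq_abs, abs_div, div_lt_one (abs_pos.mpr hg0ne)]
          exact hlt k hkne
        have h2 : Tendsto (fun n : ℕ => (g (k : ℕ) / g 0) ^ n) atTop (nhds 0) :=
          tendsto_pow_atTop_nhds_zero_of_norm_lt_one habs
        have h3 : Tendsto (fun n : ℕ => c k * (g (k : ℕ) / g 0) ^ n) atTop (nhds 0) := by
          simpa using h2.const_mul (c k)
        simpa using h3.smul_const (v k)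
    have h4 : (∑ k, (if k = k0 then c k0 • v k0 else 0)) = c k0 • v k0 := by
      simp
    rw [h4] at h1
    refine h1.congr fun n => (hXn n).symm
  -- convergence of the normalizing sums
  set σ : ℕ → ℝ := fun n => (g 0 ^ n)⁻¹ * s n with hσdef
  have hσeq : ∀ n : ℕ, σ n = ∑ i, ((g 0 ^ n)⁻¹ • (A ^ n).mulVec P) i := by
    intro n
    simp only [hσdef, hs n, Finset.mul_sum, Pi.smul_apply, smul_eq_mul]
  have hsumv : (∑ i, (c k0 • v k0) i) = c k0 := by
    rw [hvk0]
    simp [Pi.single_apply]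
  have hσtend : Tendsto σ atTop (nhds (c k0)) := by
    rw [← hsumv]
    have := tendsto_finset_sum (Finset.univ : Finset (Fin S))
      (fun i _ => (tendsto_pi_nhds.mp htend) i)
    exact this.congr fun n => (hσeq n).symm
  have hσne : ∀ᶠ n in atTop, σ n ≠ 0 := hσtend.eventually_ne hc0
  have hsne : ∀ᶠ n in atTop, s n ≠ 0 := by
    filter_upwards [hσne] with n hn hsn
    exact hn (by rw [hσdef]; simp [hsn])
  refine ⟨hsne, ?_⟩
  -- final convergence
  have hfinal : ∀ n : ℕ, (s n)⁻¹ • (A ^ n).mulVec P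
      = (σ n)⁻¹ • ((g 0 ^ n)⁻¹ • (A ^ n).mulVec P) := by
    intro n
    rw [smul_smul]
    congr 1
    rw [hσdef]
    simp only [mul_inv, inv_inv]
    rw [mul_comm (g 0 ^ n) ((s n)⁻¹), mul_assoc, mul_inv_cancel₀ (hpowne n), mul_one]
  have h5 : Tendsto (fun n : ℕ => (σ n)⁻¹ • ((g 0 ^ n)⁻¹ • (A ^ n).mulVec P)) atTop
      (nhds ((c k0)⁻¹ • (c k0 • v k0))) := (hσtend.inv₀ hc0).smul htend
  have h6 : (c k0)⁻¹ • (c k0 • v k0) = Pi.single k0 (1:ℝ) := by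
    rw [smul_smul, inv_mul_cancel₀ hc0, one_smul, hvk0]
  rw [h6] at h5
  exact h5.congr fun n => (hfinal n).symm
end
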